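/- arXiv:2605.18335 — 2 statements merged into one kernel-verified Lean document; each statement's English description precedes it below -/
import Mathlib

section
/- Let n = 2^ℓ, let S = {u_1, ..., u_m} be a set of m distinct nonzero vectors in F_2^d, and let h : F_2^d → F_2^ℓ be a uniformly random linear map. Fix y ∈ F_2^ℓ, define Z_y = |{i : h(u_i) = y}|, and set λ = m/n. Then for every integer r ≥ 0, with a = ⌈log_2(r+2)⌉, we have Pr[Z_y > r] ≤ λ^a · (∏_{j=0}^{a-1} (r + 2 - 2^j))^{-1}. -/
/-!
Double counting pairs (h, t) where t is an ordered a-tuple of indices with u ∘ t linearly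
independent and h maps every u (t j) to y. If h hits y more than r times, such tuples can be
chosen greedily in at least ∏ j < a, (r + 2 - 2 ^ j) ways: the span of the first j choices has
2 ^ j elements and so contains at most 2 ^ j - 1 of the distinct nonzero u i. Conversely, for a
fixed independent tuple the maps sending it to y form a fibre of the surjective restriction
map onto (F_2^ℓ)^a, so they are a 1 / n ^ a fraction of all maps, and there are at most m ^ a
tuples. Taking a = ⌈log₂ (r + 2)⌉ keeps every factor of the product positive.
-/

/-- The space of F_2-linear maps from F_2^d to F_2^ℓ. -/
abbrev Lin (d ℓ : ℕ) := (Fin d → ZMod 2) →ₗ[ZMod 2] (Fin ℓ → ZMod 2)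

open Finset Function Set Submodule

theorem AddMonoidHom.card_fiber_mul_card_of_surjective {G H : Type*} [AddGroup G] [AddGroup H]
    {f : G →+ H} (hf : Surjective f) (y : H) :
    Nat.card (f ⁻¹' {y}) * Nat.card H = Nat.card G := by
  rw [Nat.card_congr (f.fiberEquivKerOfSurjective hf y), ← AddSubgroup.card_top (G := H),
    ← f.range_eq_top_of_surjective hf, ← AddSubgroup.index_ker, AddSubgroup.card_mul_index]

section LinearMaps

variable {K V W ι : Type*} [DivisionRing K] [AddCommGroup V] [Module K V]
  [AddCommGroup W] [Module K W] {v : ι → V}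

instance LinearMap.finite_of_finite [Finite V] [Finite W] : Finite (V →ₗ[K] W) :=
  Finite.of_injective _ DFunLike.coe_injective

theorem LinearIndependent.surjective_comp_linearMap (hv : LinearIndependent K v) :
    Surjective fun f : V →ₗ[K] W => ⇑f ∘ v := by
  intro w
  obtain ⟨g, hg⟩ := LinearMap.exists_extend (Finsupp.linearCombination K w ∘ₗ hv.repr)
  refine ⟨g, funext fun j => ?_⟩
  have := LinearMap.congr_fun hg ⟨v j, subset_span (mem_range_self j)⟩
  simpa [hv.repr_eq_single j ⟨v j, _⟩ rfl] using this

theorem LinearIndependent.card_linearMap_apply_eq_mul [Finite ι] (hv : LinearIndependent K v)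
    (w : ι → W) :
    Nat.card {f : V →ₗ[K] W // ∀ j, f (v j) = w j} * Nat.card W ^ Nat.card ι =
      Nat.card (V →ₗ[K] W) := by
  let E : (V →ₗ[K] W) →+ (ι → W) :=
    { toFun := fun f => f ∘ v, map_zero' := rfl, map_add' := fun _ _ => rfl }
  rw [← Nat.card_fun, ← E.card_fiber_mul_card_of_surjective hv.surjective_comp_linearMap w]
  congr 1
  exact Nat.card_congr (Equiv.subtypeEquivRight fun f => funext_iff.symm)

theorem LinearIndependent.card_span_range [Finite ι] (hv : LinearIndependent K v) :
    Nat.card (span K (range v)) = Nat.card K ^ Nat.card ι := by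
  have := Fintype.ofFinite ι
  rw [Nat.card_congr (Module.Basis.span hv).equivFun.toEquiv, Nat.card_fun]

end LinearMaps

section IndependentTuples

variable (K : Type*) {V ι : Type*} [DivisionRing K] [AddCommGroup V] [Module K V]

open Classical in
noncomputable def indepTuples [Fintype ι] (v : ι → V) (T : Finset ι) (a : ℕ) :
    Finset (Fin a → ι) :=
  {t | (∀ j, t j ∈ T) ∧ LinearIndependent K (v ∘ t)}

variable {K} {v : ι → V}

@[simp]
theorem mem_indepTuples [Fintype ι] {T : Finset ι} {a : ℕ} {t : Fin a → ι} :
    t ∈ indepTuples K v T a ↔ (∀ j, t j ∈ T) ∧ LinearIndependent K (v ∘ t) := by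
  simp [indepTuples]

open Classical in
theorem card_filter_mem_submodule_le (hv : Injective v) (hv0 : ∀ i, v i ≠ 0)
    (U : Submodule K V) [Finite U] (T : Finset ι) :
    #{i ∈ T | v i ∈ U} ≤ Nat.card U - 1 := by
  rw [← Set.ncard_coe_finset, ← SetLike.coe_sort_coe, Nat.card_coe_set_eq,
    ← Set.ncard_sdiff_singleton_of_mem (SetLike.mem_coe.2 U.zero_mem)]
  refine Set.ncard_le_ncard_of_injOn v (fun i hi => ?_) hv.injOn (Set.toFinite _)
  exact ⟨(Finset.mem_filter.1 hi).2, hv0 i⟩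

open Classical in
theorem card_add_one_sub_pow_le_card_filter_notMem_span [Fintype ι] [Finite K]
    (hv : Injective v) (hv0 : ∀ i, v i ≠ 0) {T : Finset ι} {a : ℕ} {s : Fin a → ι}
    (hs : s ∈ indepTuples K v T a) :
    #T + 1 - Nat.card K ^ a ≤ #{i ∈ T | v i ∉ span K (range (v ∘ s))} := by
  have hspan := (mem_indepTuples.1 hs).2.card_span_range
  rw [Nat.card_fin] at hspan
  have : Finite (span K (range (v ∘ s))) :=
    Nat.finite_of_card_ne_zero (hspan ▸ (pow_pos Nat.card_pos a).ne')
  have hin := card_filter_mem_submodule_le hv hv0 (span K (range (v ∘ s))) T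
  have hsplit :=
    Finset.card_filter_add_card_filter_not (s := T) (fun i => v i ∈ span K (range (v ∘ s)))
  have hpos : 0 < Nat.card K ^ a := pow_pos Nat.card_pos a
  omega

open Classical in
theorem sum_card_filter_notMem_span_le [Fintype ι] (T : Finset ι) (a : ℕ) :
    ∑ s ∈ indepTuples K v T a, #{i ∈ T | v i ∉ span K (range (v ∘ s))} ≤
      #(indepTuples K v T (a + 1)) := by
  rw [← card_sigma]
  refine card_le_card_of_injOn (fun p => Fin.snoc p.1 p.2) (fun p hp => ?_) ?_
  · simp only [Finset.mem_coe, mem_sigma, mem_indepTuples, Finset.mem_filter] at hp ⊢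
    refine ⟨Fin.lastCases (by simpa using hp.2.1) fun j => by simpa using hp.1.1 j, ?_⟩
    rw [Fin.comp_snoc, linearIndependent_finSnoc]
    exact ⟨hp.1.2, hp.2.2⟩
  · rintro ⟨s, i⟩ - ⟨s', i'⟩ - h
    obtain ⟨rfl, rfl⟩ := Fin.snoc_injective2 h
    rfl

theorem prod_card_add_one_sub_pow_le_card_indepTuples [Fintype ι] [Finite K]
    (hv : Injective v) (hv0 : ∀ i, v i ≠ 0) (T : Finset ι) (a : ℕ) :
    ∏ j ∈ range a, (#T + 1 - Nat.card K ^ j) ≤ #(indepTuples K v T a) := by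
  induction a with
  | zero => simp [indepTuples]
  | succ a ih =>
    calc ∏ j ∈ range (a + 1), (#T + 1 - Nat.card K ^ j)
        ≤ #(indepTuples K v T a) * (#T + 1 - Nat.card K ^ a) := by
          rw [prod_range_succ]; gcongr
      _ ≤ _ := card_nsmul_le_sum _ _ _ fun s hs =>
          card_add_one_sub_pow_le_card_filter_notMem_span hv hv0 hs
      _ ≤ _ := sum_card_filter_notMem_span_le T a

end IndependentTuples

section RandomLinearMaps

variable {K V W ι : Type*} [DivisionRing K] [Finite K] [AddCommGroup V] [Module K V] [Finite V]
  [AddCommGroup W] [Module K W] [Finite W] [Fintype ι] {u : ι → V}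

theorem card_linearMap_lt_card_fiber_mul_le (hu : Injective u) (hu0 : ∀ i, u i ≠ 0) (y : W)
    (r a : ℕ) :
    Nat.card {f : V →ₗ[K] W // r < Nat.card {i // f (u i) = y}} *
        (∏ j ∈ range a, (r + 2 - Nat.card K ^ j)) * Nat.card W ^ a ≤
      Fintype.card ι ^ a * Nat.card (V →ₗ[K] W) := by
  classical
  have := Fintype.ofFinite (V →ₗ[K] W)
  let hits (f : V →ₗ[K] W) : Finset ι := {i | f (u i) = y}
  let bad : Finset (V →ₗ[K] W) := {f | r < #(hits f)}
  let indep : Finset (Fin a → ι) := {t | LinearIndependent K (u ∘ t)}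
  let sendsTo (f : V →ₗ[K] W) (t : Fin a → ι) : Prop := ∀ j, f (u (t j)) = y
  have hbad : ∀ f ∈ bad,
      ∏ j ∈ range a, (r + 2 - Nat.card K ^ j) ≤ #(indep.bipartiteAbove sendsTo f) := by
    intro f hf
    have hhits : r + 1 ≤ #(hits f) := (Finset.mem_filter.1 hf).2
    have : indep.bipartiteAbove sendsTo f = indepTuples K u (hits f) a := by
      ext t; simp [indep, sendsTo, hits, bipartiteAbove, and_comm]
    rw [this]
    refine le_trans ?_ (prod_card_add_one_sub_pow_le_card_indepTuples hu hu0 _ a)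
    exact prod_le_prod' fun j _ => Nat.sub_le_sub_right (by omega) _
  have hindep : ∀ t ∈ indep,
      #(bad.bipartiteBelow sendsTo t) ≤ Nat.card (V →ₗ[K] W) / Nat.card W ^ a := by
    intro t ht
    have hfib := (Finset.mem_filter.1 ht).2.card_linearMap_apply_eq_mul (W := W) fun _ => y
    rw [Nat.card_fin] at hfib
    rw [← hfib, Nat.mul_div_cancel _ (pow_pos Nat.card_pos a), Nat.card_eq_fintype_card,
      Fintype.card_subtype]
    exact card_le_card (filter_subset_filter _ (subset_univ _))
  have hnum : Nat.card {f : V →ₗ[K] W // r < Nat.card {i // f (u i) = y}} = #bad := by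
    rw [Nat.card_eq_fintype_card, Fintype.card_subtype]
    simp [bad, hits, Nat.card_eq_fintype_card, Fintype.card_subtype]
  calc _ ≤ #indep * (Nat.card (V →ₗ[K] W) / Nat.card W ^ a) * Nat.card W ^ a := by
        rw [hnum]; exact Nat.mul_le_mul_right _ (card_mul_le_card_mul sendsTo hbad hindep)
    _ ≤ Fintype.card ι ^ a * Nat.card (V →ₗ[K] W) := by
        rw [mul_assoc]
        gcongr
        · simpa using card_le_univ indep
        · exact Nat.div_mul_le_self _ _

end RandomLinearMaps

/-- Let n = 2^ℓ, let S = {u_1, ..., u_m} be a set of m distinct nonzero vectors in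
F_2^d, and let h : F_2^d → F_2^ℓ be a uniformly random linear map. Fix y ∈ F_2^ℓ, define
Z_y = |{i : h(u_i) = y}|, and set λ = m/n. Then for every integer r ≥ 0, with a = ⌈log_2(r+2)⌉,
we have Pr[Z_y > r] ≤ λ^a · (∏_{j=0}^{a-1} (r + 2 - 2^j))^{-1}. -/
theorem stmt_13 (ℓ d m n : ℕ) (hn : n = 2 ^ ℓ)
    (u : Fin m → (Fin d → ZMod 2))
    (hu_inj : Function.Injective u) (hu_ne : ∀ i, u i ≠ 0)
    (y : Fin ℓ → ZMod 2) (lam : ℝ) (hlam : lam = (m : ℝ) / n)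
    (r a : ℕ) (ha : a = Nat.clog 2 (r + 2)) :
    (Nat.card {h : Lin d ℓ // r < Nat.card {i : Fin m // h (u i) = y}} : ℝ) /
        (Nat.card (Lin d ℓ) : ℝ) ≤
      lam ^ a * ((∏ j ∈ Finset.range a, (r + 2 - 2 ^ j) : ℕ) : ℝ)⁻¹ := by
  have hP : 0 < ∏ j ∈ range a, (r + 2 - 2 ^ j) :=
    prod_pos fun j hj => Nat.sub_pos_of_lt (Nat.pow_lt_of_lt_clog (ha ▸ mem_range.1 hj))
  have hcount := card_linearMap_lt_card_fiber_mul_le (K := ZMod 2) hu_inj hu_ne y r a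
  have hL : 0 < Nat.card (Lin d ℓ) := Nat.card_pos
  simp only [Nat.card_zmod, Nat.card_fun, Nat.card_fin, Fintype.card_fin] at hcount
  subst hlam hn
  field_simp
  rw [div_pow, ← mul_div_assoc, le_div_iff₀ (by positivity)]
  have := (Nat.cast_le (α := ℝ)).2 hcount
  push_cast at this ⊢
  linear_combination this
end

section
/- Let n = 2^ℓ, let S be a set of m distinct nonzero vectors in F_2^d, let h : F_2^d → F_2^ℓ be a uniformly random linear map, fix y ∈ F_2^ℓ, and define Z_y = |{x ∈ S : h(x) = y}| and λ = m/n. Then for every integer a ≥ 1, Pr[Z_y > 2^a - 2] ≤ γ^{-1} λ^a 2^{-a^2}, where γ = ∏_{j=1}^∞ (1 - 2^{-j}). -/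
/-- γ = ∏_{j=1}^∞ (1 - 2^{-j}). -/
noncomputable def gammaProd : ℝ := ∏' j : ℕ, (1 - (2 : ℝ)⁻¹ ^ (j + 1))

/-! Count pairs `(h, v)` with `v` a linearly independent `a`-tuple of points of `S` such that
`h vᵢ = y` for all `i`. For a fixed independent `v` these `a` constraints cut out exactly
`|Lin| / n^a` maps, so there are at most `m^a |Lin| / n^a` pairs. On the other hand, if
`S ∩ h⁻¹(y)` has at least `2^a - 1` points, none of them zero, then choosing the tuple
greedily, each new vector outside the span of the previous `i` ones, gives at least
`∏_{i<a} (2^a - 2^i) = 2^{a²} ∏_{j=1}^{a} (1 - 2^{-j}) ≥ 2^{a²} γ` tuples for this `h`. -/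

open Finset

lemma AddMonoidHom.card_fiber_mul_card_of_surjective_s14 {G H : Type*} [AddGroup G] [Fintype G]
    [AddGroup H] [Fintype H] [DecidableEq H] (φ : G →+ H) (hφ : Function.Surjective φ)
    (c : H) :
    #{g | φ g = c} * Fintype.card H = Fintype.card G := by
  calc #{g | φ g = c} * Fintype.card H = ∑ b : H, #{g | φ g = b} := by
        rw [sum_congr rfl fun b _ => card_fiber_eq_of_mem_range φ (hφ b) (hφ c), sum_const,
          card_univ, smul_eq_mul, mul_comm]
    _ = Fintype.card G := (card_eq_sum_card_fiberwise fun _ _ => mem_univ _).symm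

section LinearAlgebra

variable {K V W : Type*} [Field K] [AddCommGroup V] [Module K V] [AddCommGroup W] [Module K W]

lemma LinearIndependent.exists_linearMap_apply_eq {ι : Type*} {f : ι → V}
    (hf : LinearIndependent K f) (g : ι → W) : ∃ h : V →ₗ[K] W, ∀ i, h (f i) = g i := by
  obtain ⟨h, hh⟩ := LinearMap.exists_extend (Finsupp.linearCombination K g ∘ₗ hf.repr)
  refine ⟨h, fun i => ?_⟩
  have := congr($hh ⟨f i, Submodule.subset_span ⟨i, rfl⟩⟩)
  simpa [hf.repr_eq_single i] using this

lemma LinearIndependent.card_linearMap_apply_eq_mul_s14 [Fintype (V →ₗ[K] W)] [Fintype W]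
    [DecidableEq W] {ι : Type*} [Fintype ι] [DecidableEq ι] {f : ι → V}
    (hf : LinearIndependent K f) (g : ι → W) :
    #{h : V →ₗ[K] W | ∀ i, h (f i) = g i} * Fintype.card W ^ Fintype.card ι =
      Fintype.card (V →ₗ[K] W) := by
  let eval : (V →ₗ[K] W) →+ (ι → W) := AddMonoidHom.mk' (fun h i => h (f i)) fun _ _ => rfl
  have hsurj : Function.Surjective eval := fun g =>
    (hf.exists_linearMap_apply_eq g).imp fun _ hh => funext hh
  rw [← eval.card_fiber_mul_card_of_surjective_s14 hsurj g, Fintype.card_fun]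
  simp [eval, funext_iff]

variable (K) in
open Classical in
noncomputable def linIndepTuples (T : Finset V) (k : ℕ) : Finset (Fin k → V) :=
  {f ∈ Fintype.piFinset fun _ => T | LinearIndependent K f}

lemma mem_linIndepTuples {T : Finset V} {k : ℕ} {f : Fin k → V} :
    f ∈ linIndepTuples K T k ↔ (∀ i, f i ∈ T) ∧ LinearIndependent K f := by
  simp [linIndepTuples]

lemma card_linIndepTuples_le (T : Finset V) (k : ℕ) : #(linIndepTuples K T k) ≤ #T ^ k := by
  classical
  simpa [linIndepTuples] using card_filter_le (Fintype.piFinset fun _ : Fin k => T) _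

lemma linIndepTuples_filter (T : Finset V) (p : V → Prop) [DecidablePred p] (k : ℕ) :
    linIndepTuples K {x ∈ T | p x} k = {f ∈ linIndepTuples K T k | ∀ i, p (f i)} := by
  ext f
  simp only [mem_linIndepTuples, mem_filter]
  grind

lemma card_filter_mem_add_one_le [Finite V] {T : Finset V} (hT : 0 ∉ T) (P : Submodule K V)
    [DecidablePred (· ∈ P)] :
    #{x ∈ T | x ∈ P} + 1 ≤ Nat.card P := by
  classical
  have h0 : (0 : V) ∉ {x ∈ T | x ∈ P} := fun h => hT (mem_filter.mp h).1
  rw [← card_insert_of_notMem h0, ← Set.ncard_coe_finset, ← SetLike.coe_sort_coe,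
    Nat.card_coe_set_eq]
  refine Set.ncard_le_ncard ?_ (Set.toFinite _)
  rw [coe_insert, Set.insert_subset_iff]
  exact ⟨P.zero_mem, fun x hx => (mem_filter.mp hx).2⟩

lemma LinearIndependent.natCard_span {k : ℕ} {g : Fin k → V} (hg : LinearIndependent K g) :
    Nat.card (Submodule.span K (Set.range g)) = Nat.card K ^ k := by
  have := FiniteDimensional.span_of_finite K (Set.finite_range g)
  rw [Module.natCard_eq_pow_finrank (K := K), finrank_span_eq_card hg, Fintype.card_fin]

lemma prod_le_card_linIndepTuples [Finite V] {T : Finset V} (hT : 0 ∉ T) (k : ℕ) :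
    ∏ i ∈ range k, (#T + 1 - Nat.card K ^ i) ≤ #(linIndepTuples K T k) := by
  classical
  induction k with
  | zero =>
    exact card_pos.mpr
      ⟨Fin.elim0, mem_linIndepTuples.mpr ⟨fun i => i.elim0, linearIndependent_empty_type⟩⟩
  | succ k ih =>
    let outside (g : Fin k → V) : Finset V := {x ∈ T | x ∉ Submodule.span K (Set.range g)}
    have houtside : ∀ g ∈ linIndepTuples K T k, #T + 1 - Nat.card K ^ k ≤ #(outside g) := by
      intro g hg
      have hinside := card_filter_mem_add_one_le hT (Submodule.span K (Set.range g))
      rw [(mem_linIndepTuples.mp hg).2.natCard_span] at hinside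
      have := card_filter_add_card_filter_not (s := T) (· ∈ Submodule.span K (Set.range g))
      simp only [outside]
      omega
    have hmaps :
        Set.MapsTo (fun p : (_ : Fin k → V) × V => (Fin.cons p.2 p.1 : Fin (k + 1) → V))
        ((linIndepTuples K T k).sigma outside) (linIndepTuples K T (k + 1)) := by
      rintro ⟨g, x⟩ hgx
      obtain ⟨hg, hx⟩ := mem_sigma.mp hgx
      obtain ⟨hgT, hg⟩ := mem_linIndepTuples.mp hg
      obtain ⟨hxT, hx⟩ := mem_filter.mp hx
      exact mem_linIndepTuples.mpr
        ⟨Fin.cases hxT hgT, linearIndependent_finCons.mpr ⟨hg, hx⟩⟩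
    have hinj : Set.InjOn (fun p : (_ : Fin k → V) × V => (Fin.cons p.2 p.1 : Fin (k + 1) → V))
        ((linIndepTuples K T k).sigma outside) := by
      rintro ⟨g, x⟩ - ⟨g', x'⟩ - h
      obtain ⟨rfl, rfl⟩ := Fin.cons_injective2 h
      rfl
    calc ∏ i ∈ range (k + 1), (#T + 1 - Nat.card K ^ i)
        = (∏ i ∈ range k, (#T + 1 - Nat.card K ^ i)) * (#T + 1 - Nat.card K ^ k) :=
          prod_range_succ _ _
      _ ≤ #(linIndepTuples K T k) • (#T + 1 - Nat.card K ^ k) := Nat.mul_le_mul_right _ ih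
      _ ≤ ∑ g ∈ linIndepTuples K T k, #(outside g) := card_nsmul_le_sum _ _ _ houtside
      _ = #((linIndepTuples K T k).sigma outside) := (card_sigma _ _).symm
      _ ≤ #(linIndepTuples K T (k + 1)) := card_le_card_of_injOn _ hmaps hinj

lemma sum_card_linIndepTuples_filter_apply_eq_mul [Fintype (V →ₗ[K] W)] [Fintype W]
    [DecidableEq W] (S : Finset V) (y : W) (k : ℕ) :
    (∑ h : V →ₗ[K] W, #(linIndepTuples K {x ∈ S | h x = y} k)) * Fintype.card W ^ k =
      #(linIndepTuples K S k) * Fintype.card (V →ₗ[K] W) := by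
  simp_rw [linIndepTuples_filter]
  have hswap := sum_card_bipartiteAbove_eq_sum_card_bipartiteBelow (s := univ)
    (t := linIndepTuples K S k) fun (h : V →ₗ[K] W) f => ∀ i, h (f i) = y
  simp only [bipartiteAbove, bipartiteBelow] at hswap
  rw [hswap, sum_mul]
  exact sum_const_nat fun f hf => by
    convert (mem_linIndepTuples.mp hf).2.card_linearMap_apply_eq_mul_s14 fun _ => y
    rw [Fintype.card_fin]

lemma card_linearMap_pow_sub_one_le_card_fiber_mul_le [Finite V] [Fintype (V →ₗ[K] W)]
    [Fintype W] [DecidableEq W] {S : Finset V} (hS : 0 ∉ S) (y : W) (a : ℕ) :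
    #{h : V →ₗ[K] W | Nat.card K ^ a - 1 ≤ #{x ∈ S | h x = y}} *
        (∏ i ∈ range a, (Nat.card K ^ a - Nat.card K ^ i)) * Fintype.card W ^ a ≤
      #S ^ a * Fintype.card (V →ₗ[K] W) := by
  have hmany : #{h : V →ₗ[K] W | Nat.card K ^ a - 1 ≤ #{x ∈ S | h x = y}} *
        ∏ i ∈ range a, (Nat.card K ^ a - Nat.card K ^ i) ≤
      ∑ h : V →ₗ[K] W, #(linIndepTuples K {x ∈ S | h x = y} a) := by
    rw [card_eq_sum_ones, sum_mul, sum_filter]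
    refine sum_le_sum fun h _ => ?_
    split_ifs with hh
    · rw [one_mul]
      refine le_trans (prod_le_prod' fun i _ => ?_) (prod_le_card_linIndepTuples ?_ a)
      · omega
      · exact fun h0 => hS (mem_filter.mp h0).1
    · simp
  calc _ ≤ (∑ h : V →ₗ[K] W, #(linIndepTuples K {x ∈ S | h x = y} a)) *
        Fintype.card W ^ a := Nat.mul_le_mul_right _ hmany
    _ = #(linIndepTuples K S a) * Fintype.card (V →ₗ[K] W) :=
        sum_card_linIndepTuples_filter_apply_eq_mul S y a
    _ ≤ #S ^ a * Fintype.card (V →ₗ[K] W) :=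
        Nat.mul_le_mul_right _ (card_linIndepTuples_le S a)

end LinearAlgebra

lemma summable_two_inv_pow_succ : Summable fun j : ℕ => (2 : ℝ)⁻¹ ^ (j + 1) :=
  (summable_nat_add_iff 1).mpr (summable_geometric_of_lt_one (by norm_num) (by norm_num))

lemma one_sub_two_inv_pow_succ_pos (j : ℕ) : 0 < 1 - (2 : ℝ)⁻¹ ^ (j + 1) :=
  sub_pos.mpr (pow_lt_one₀ (by norm_num) (by norm_num) j.succ_ne_zero)

lemma gammaProd_pos : 0 < gammaProd := by
  have hlog : Summable fun j : ℕ => Real.log (1 - (2 : ℝ)⁻¹ ^ (j + 1)) := by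
    simpa [sub_eq_add_neg] using
      Real.summable_log_one_add_of_summable summable_two_inv_pow_succ.neg
  rw [gammaProd, ← Real.rexp_tsum_eq_tprod one_sub_two_inv_pow_succ_pos hlog]
  exact Real.exp_pos _

lemma gammaProd_le_prod_range (a : ℕ) :
    gammaProd ≤ ∏ j ∈ range a, (1 - (2 : ℝ)⁻¹ ^ (j + 1)) := by
  have hmul : Multipliable fun j : ℕ => 1 - (2 : ℝ)⁻¹ ^ (j + 1) := by
    simpa [sub_eq_add_neg] using
      Real.multipliable_one_add_of_summable summable_two_inv_pow_succ.neg
  refine Antitone.le_of_tendsto (antitone_nat_of_succ_le fun n => ?_)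
    hmul.hasProd.tendsto_prod_nat a
  rw [prod_range_succ]
  exact mul_le_of_le_one_right (prod_nonneg fun j _ => (one_sub_two_inv_pow_succ_pos j).le)
    (sub_le_self _ (by positivity))

lemma prod_range_two_pow_sub_two_pow (a : ℕ) :
    ∏ i ∈ range a, ((2 : ℝ) ^ a - 2 ^ i) =
      2 ^ (a ^ 2) * ∏ j ∈ range a, (1 - (2 : ℝ)⁻¹ ^ (j + 1)) := by
  have hpow : (2 : ℝ) ^ (a ^ 2) = ∏ _j ∈ range a, (2 : ℝ) ^ a := by
    rw [prod_const, card_range, ← pow_mul, sq]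
  rw [hpow, ← prod_mul_distrib, ← prod_range_reflect (fun i => (2 : ℝ) ^ a - 2 ^ i)]
  refine prod_congr rfl fun j hj => ?_
  have hexp : a - 1 - j + (j + 1) = a := by have := mem_range.mp hj; omega
  rw [mul_sub, mul_one, ← hexp, pow_add, mul_assoc, ← mul_pow]
  norm_num

lemma gammaProd_mul_two_pow_sq_le (a : ℕ) :
    gammaProd * 2 ^ (a ^ 2) ≤ ((∏ i ∈ range a, (2 ^ a - 2 ^ i) : ℕ) : ℝ) := by
  rw [Nat.cast_prod, prod_congr rfl fun i hi => Nat.cast_sub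
    (Nat.pow_le_pow_right two_pos (mem_range.mp hi).le), mul_comm]
  push_cast
  rw [prod_range_two_pow_sub_two_pow]
  gcongr
  exact gammaProd_le_prod_range a

lemma card_linearMap_pow_sub_one_le_card_fiber_div_le {V W : Type*} [AddCommGroup V]
    [Module (ZMod 2) V] [AddCommGroup W] [Module (ZMod 2) W] [Finite V]
    [Fintype (V →ₗ[ZMod 2] W)] [Fintype W] [DecidableEq W] {S : Finset V} (hS : 0 ∉ S)
    (y : W) (a : ℕ) :
    (#{h : V →ₗ[ZMod 2] W | 2 ^ a - 1 ≤ #{x ∈ S | h x = y}} : ℝ) /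
        Fintype.card (V →ₗ[ZMod 2] W) ≤
      gammaProd⁻¹ * (#S / Fintype.card W : ℝ) ^ a * ((2 : ℝ) ^ (a ^ 2))⁻¹ := by
  have hcount := card_linearMap_pow_sub_one_le_card_fiber_mul_le (K := ZMod 2) hS y a
  rw [Nat.card_zmod] at hcount
  set B := #{h : V →ₗ[ZMod 2] W | 2 ^ a - 1 ≤ #{x ∈ S | h x = y}}
  set L := Fintype.card (V →ₗ[ZMod 2] W)
  have hL : (0 : ℝ) < L := by exact_mod_cast Fintype.card_pos
  have hD : 0 < gammaProd * 2 ^ (a ^ 2) * (Fintype.card W : ℝ) ^ a := by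
    have := gammaProd_pos
    have : (0 : ℝ) < Fintype.card W := by exact_mod_cast Fintype.card_pos
    positivity
  have hBD : B * (gammaProd * 2 ^ (a ^ 2) * (Fintype.card W : ℝ) ^ a) ≤ #S ^ a * L := by
    calc B * (gammaProd * 2 ^ (a ^ 2) * (Fintype.card W : ℝ) ^ a)
        ≤ B * (∏ i ∈ range a, (2 ^ a - 2 ^ i) : ℕ) * (Fintype.card W : ℝ) ^ a := by
          rw [← mul_assoc]
          gcongr
          exact gammaProd_mul_two_pow_sq_le a
      _ ≤ #S ^ a * L := by exact_mod_cast hcount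
  rw [div_le_iff₀ hL]
  calc (B : ℝ) ≤ #S ^ a * L / (gammaProd * 2 ^ (a ^ 2) * (Fintype.card W : ℝ) ^ a) :=
        (le_div_iff₀ hD).mpr hBD
    _ = _ := by
      rw [div_pow]
      field_simp

theorem stmt_14_general (ℓ d m n : ℕ) (hn : n = 2 ^ ℓ)
    (S : Finset (Fin d → ZMod 2)) (hScard : S.card = m)
    (hS0 : (0 : Fin d → ZMod 2) ∉ S)
    (y : Fin ℓ → ZMod 2) (lam : ℝ) (hlam : lam = (m : ℝ) / n)
    (a : ℕ) :
    (Nat.card {h : Lin d ℓ // 2 ^ a - 2 < (S.filter (fun x => h x = y)).card} : ℝ) /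
        (Nat.card (Lin d ℓ) : ℝ) ≤
      gammaProd⁻¹ * lam ^ a * ((2 : ℝ) ^ (a ^ 2))⁻¹ := by
  subst hn hScard hlam
  have : Finite (Lin d ℓ) := Module.finite_of_finite (ZMod 2)
  have := Fintype.ofFinite (Lin d ℓ)
  have hbad : Nat.card {h : Lin d ℓ // 2 ^ a - 2 < #{x ∈ S | h x = y}} ≤
      #{h : Lin d ℓ | 2 ^ a - 1 ≤ #{x ∈ S | h x = y}} := by
    rw [Nat.card_eq_fintype_card, Fintype.card_subtype]
    exact card_le_card (monotone_filter_right _ fun _ _ => by omega)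
  rw [Nat.card_eq_fintype_card (α := Lin d ℓ)]
  refine (div_le_div_of_nonneg_right (Nat.cast_le.mpr hbad) (Nat.cast_nonneg _)).trans ?_
  simpa using card_linearMap_pow_sub_one_le_card_fiber_div_le hS0 y a

/-- Let n = 2^ℓ, let S be a set of m distinct nonzero vectors in F_2^d, let
h : F_2^d → F_2^ℓ be a uniformly random linear map, fix y ∈ F_2^ℓ, and define
Z_y = |{x ∈ S : h(x) = y}| and λ = m/n. Then for every integer a ≥ 1,
Pr[Z_y > 2^a - 2] ≤ γ^{-1} λ^a 2^{-a^2}, where γ = ∏_{j=1}^∞ (1 - 2^{-j}). -/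
theorem stmt_14 (ℓ d m n : ℕ) (hn : n = 2 ^ ℓ)
    (S : Finset (Fin d → ZMod 2)) (hScard : S.card = m)
    (hS0 : (0 : Fin d → ZMod 2) ∉ S)
    (y : Fin ℓ → ZMod 2) (lam : ℝ) (hlam : lam = (m : ℝ) / n)
    (a : ℕ) (ha : 1 ≤ a) :
    (Nat.card {h : Lin d ℓ // 2 ^ a - 2 < (S.filter (fun x => h x = y)).card} : ℝ) /
        (Nat.card (Lin d ℓ) : ℝ) ≤
      gammaProd⁻¹ * lam ^ a * ((2 : ℝ) ^ (a ^ 2))⁻¹ :=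
  stmt_14_general ℓ d m n hn S hScard hS0 y lam hlam a
end
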